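/- If moreover |f̂(x) − f(x)| > f₀/2 whenever f̂(x) ≤ f₀/2, and a⁴ ≤ a₁⁴, then taking expectations, E‖â² − a²‖ₙ² ≤ (12/f₀²)(E‖ĝ − g‖ₙ² + E‖σ̂² − σ²‖ₙ² + 2a₁⁴ E‖f − f̂‖ₙ²). -/

import Mathlib

/-! The bound holds pointwise at every sample point. Where `f̂ > f₀/2` the error of the ratio is
`((ĝ - g) - (σ̂² - σ²) + a² (f - f̂)) / f̂`, and `(x + y + z)² ≤ 3 (x² + y² + z²)` together with
`f̂² > f₀²/4` gives the constant `12 / f₀²`. Where `f̂ ≤ f₀/2` the estimator is `0`, so the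
error is `a²`, with `a⁴ ≤ a₁⁴`; the separation `|f̂ - f| > f₀/2` makes `4 (f - f̂)² / f₀² ≥ 1`,
so this is absorbed by the term in `(f - f̂)²`. Averaging over the sample and integrating
preserve the pointwise bound. -/

open MeasureTheory ENNReal

lemma add_add_sq_le (x y z : ℝ) : (x + y + z) ^ 2 ≤ 3 * (x ^ 2 + y ^ 2 + z ^ 2) := by
  nlinarith [sq_nonneg (x - y), sq_nonneg (y - z), sq_nonneg (x - z)]

section JumpCoefficient

variable {f0 a1 a f g σ fh gh σh : ℝ}

lemma sub_div_sub_sq_le_of_half_lt (hf0 : 0 < f0) (hfh : f0 / 2 < fh) (hg : g = σ + a * f) :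
    ((gh - σh) / fh - a) ^ 2
      ≤ 12 / f0 ^ 2 * ((gh - g) ^ 2 + (σh - σ) ^ 2 + a ^ 2 * (f - fh) ^ 2) := by
  have hfh_pos : 0 < fh := by linarith
  have hsq : f0 ^ 2 / 4 ≤ fh ^ 2 := by nlinarith
  have herr : (gh - σh) / fh - a = ((gh - g) + -(σh - σ) + a * (f - fh)) / fh := by
    field_simp
    rw [hg]
    ring
  rw [herr, div_pow]
  calc ((gh - g) + -(σh - σ) + a * (f - fh)) ^ 2 / fh ^ 2
      ≤ 3 * ((gh - g) ^ 2 + (σh - σ) ^ 2 + a ^ 2 * (f - fh) ^ 2) / (f0 ^ 2 / 4) := by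
        gcongr
        calc _ ≤ 3 * ((gh - g) ^ 2 + (-(σh - σ)) ^ 2 + (a * (f - fh)) ^ 2) := add_add_sq_le ..
          _ = _ := by ring
    _ = _ := by ring

lemma sq_le_of_separated (hf0 : 0 < f0) (ha : a ^ 2 ≤ a1 ^ 4) (hsep : f0 / 2 < |fh - f|) :
    a ^ 2 ≤ 12 / f0 ^ 2 * (2 * a1 ^ 4 * (f - fh) ^ 2) := by
  have hgap : f0 ^ 2 / 4 ≤ (f - fh) ^ 2 := by
    rw [← sq_abs (f - fh), abs_sub_comm]
    nlinarith
  calc a ^ 2 ≤ a1 ^ 4 := ha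
    _ ≤ 24 * a1 ^ 4 * ((f - fh) ^ 2 / f0 ^ 2) := by
        have : 1 / 4 ≤ (f - fh) ^ 2 / f0 ^ 2 := by
          rw [le_div_iff₀ (by positivity)]
          linarith
        nlinarith [pow_nonneg (sq_nonneg a1) 2]
    _ = _ := by ring

lemma thresholded_ratio_sub_sq_le (hf0 : 0 < f0) (hg : g = σ + a * f) (ha : 0 ≤ a)
    (ha1 : a ≤ a1 ^ 2) (hsep : fh ≤ f0 / 2 → f0 / 2 < |fh - f|) :
    ((if f0 / 2 < fh then (gh - σh) / fh else 0) - a) ^ 2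
      ≤ 12 / f0 ^ 2 * ((gh - g) ^ 2 + (σh - σ) ^ 2 + 2 * a1 ^ 4 * (f - fh) ^ 2) := by
  have ha4 : a ^ 2 ≤ a1 ^ 4 := by
    rw [show a1 ^ 4 = (a1 ^ 2) ^ 2 by ring]
    exact pow_le_pow_left₀ ha ha1 2
  split_ifs with hfh
  · refine (sub_div_sub_sq_le_of_half_lt hf0 hfh hg).trans ?_
    gcongr
    nlinarith [sq_nonneg (f - fh)]
  · rw [zero_sub, neg_sq]
    refine (sq_le_of_separated hf0 ha4 (hsep (le_of_not_gt hfh))).trans ?_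
    gcongr
    linarith [sq_nonneg (gh - g), sq_nonneg (σh - σ)]

end JumpCoefficient

lemma ofReal_mul_sum_le_of_le {ι : Type*} (s : Finset ι) {w c d : ℝ} (hw : 0 ≤ w) (hc : 0 ≤ c)
    (hd : 0 ≤ d) {u x y z : ι → ℝ} (h : ∀ i ∈ s, u i ≤ c * (x i + y i + d * z i)) :
    ENNReal.ofReal (w * ∑ i ∈ s, u i)
      ≤ ENNReal.ofReal c * (ENNReal.ofReal (w * ∑ i ∈ s, x i) + ENNReal.ofReal (w * ∑ i ∈ s, y i)
          + ENNReal.ofReal d * ENNReal.ofReal (w * ∑ i ∈ s, z i)) := by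
  have hsum : w * ∑ i ∈ s, u i
      ≤ c * (w * ∑ i ∈ s, x i + w * ∑ i ∈ s, y i + d * (w * ∑ i ∈ s, z i)) := by
    calc w * ∑ i ∈ s, u i ≤ w * ∑ i ∈ s, c * (x i + y i + d * z i) :=
          mul_le_mul_of_nonneg_left (Finset.sum_le_sum h) hw
      _ = _ := by
          simp only [mul_add, Finset.sum_add_distrib, ← Finset.mul_sum]
          ring
  calc ENNReal.ofReal (w * ∑ i ∈ s, u i)
      ≤ ENNReal.ofReal (c * (w * ∑ i ∈ s, x i + w * ∑ i ∈ s, y i + d * (w * ∑ i ∈ s, z i))) :=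
        ENNReal.ofReal_le_ofReal hsum
    _ ≤ _ := by
        rw [ENNReal.ofReal_mul hc, ← ENNReal.ofReal_mul hd]
        gcongr
        exact ofReal_add_le.trans (by gcongr; exact ofReal_add_le)

lemma lintegral_le_const_mul_add_add {Ω : Type*} [MeasurableSpace Ω] {μ : Measure Ω}
    {F A B C : Ω → ℝ≥0∞} {c d : ℝ≥0∞} (hA : Measurable A) (hB : Measurable B) (hc : c ≠ ∞) (hd : d ≠ ∞)
    (h : ∀ ω, F ω ≤ c * (A ω + B ω + d * C ω)) :
    ∫⁻ ω, F ω ∂μ ≤ c * (∫⁻ ω, A ω ∂μ + ∫⁻ ω, B ω ∂μ + d * ∫⁻ ω, C ω ∂μ) := by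
  calc ∫⁻ ω, F ω ∂μ ≤ ∫⁻ ω, c * (A ω + B ω + d * C ω) ∂μ := lintegral_mono h
    _ = _ := by
        rw [lintegral_const_mul' c _ hc, lintegral_add_left (f := fun ω => A ω + B ω) (hA.add hB), lintegral_add_left hA,
          lintegral_const_mul' d C hd]

theorem expected_empirical_risk_bound_jump_coefficient_general
    {Ω : Type*} [MeasurableSpace Ω] (μ : Measure Ω)
    (n : ℕ) (X : Fin n → Ω → ℝ) (hX : ∀ i, Measurable (X i))
    (f g σ2 a2 gh σh fh : ℝ → ℝ)
    (hmg : Measurable g) (hmσ2 : Measurable σ2)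
    (hmgh : Measurable gh) (hmσh : Measurable σh)
    (f0 a1 : ℝ) (hf0 : 0 < f0)
    (hg : ∀ y, g y = σ2 y + a2 y * f y)
    (ha2nn : ∀ y, 0 ≤ a2 y) (ha2bd : ∀ y, a2 y ≤ a1 ^ 2)
    (hsep : ∀ y, fh y ≤ f0 / 2 → f0 / 2 < |fh y - f y|) :
    (∫⁻ ω, ENNReal.ofReal ((1 / (n : ℝ)) * ∑ i,
        ((if f0 / 2 < fh (X i ω) then (gh (X i ω) - σh (X i ω)) / fh (X i ω) else 0)
          - a2 (X i ω)) ^ 2) ∂μ)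
      ≤ ENNReal.ofReal (12 / f0 ^ 2) *
          ((∫⁻ ω, ENNReal.ofReal ((1 / (n : ℝ)) * ∑ i, (gh (X i ω) - g (X i ω)) ^ 2) ∂μ)
            + (∫⁻ ω, ENNReal.ofReal ((1 / (n : ℝ)) * ∑ i, (σh (X i ω) - σ2 (X i ω)) ^ 2) ∂μ)
            + ENNReal.ofReal (2 * a1 ^ 4) *
                (∫⁻ ω, ENNReal.ofReal ((1 / (n : ℝ)) * ∑ i, (f (X i ω) - fh (X i ω)) ^ 2) ∂μ)) := by
  refine lintegral_le_const_mul_add_add (by fun_prop) (by fun_prop) ofReal_ne_top ofReal_ne_top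
    fun ω => ofReal_mul_sum_le_of_le _ (by positivity) (by positivity) (by positivity)
      fun i _ => thresholded_ratio_sub_sq_le hf0 (hg _) (ha2nn _) (ha2bd _) (hsep _)

theorem expected_empirical_risk_bound_jump_coefficient
    {Ω : Type*} [MeasurableSpace Ω] (μ : Measure Ω) [IsProbabilityMeasure μ]
    (n : ℕ) (hn : 0 < n) (X : Fin n → Ω → ℝ) (hX : ∀ i, Measurable (X i))
    (f g σ2 a2 gh σh fh : ℝ → ℝ)
    (hmf : Measurable f) (hmg : Measurable g) (hmσ2 : Measurable σ2)
    (hma2 : Measurable a2) (hmgh : Measurable gh) (hmσh : Measurable σh)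
    (hmfh : Measurable fh)
    (f0 a1 : ℝ) (hf0 : 0 < f0)
    (hf : ∀ y, f0 < f y)
    (hg : ∀ y, g y = σ2 y + a2 y * f y)
    (ha2nn : ∀ y, 0 ≤ a2 y) (ha2bd : ∀ y, a2 y ≤ a1 ^ 2)
    (hsep : ∀ y, fh y ≤ f0 / 2 → f0 / 2 < |fh y - f y|) :
    (∫⁻ ω, ENNReal.ofReal ((1 / (n : ℝ)) * ∑ i,
        ((if f0 / 2 < fh (X i ω) then (gh (X i ω) - σh (X i ω)) / fh (X i ω) else 0)
          - a2 (X i ω)) ^ 2) ∂μ)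
      ≤ ENNReal.ofReal (12 / f0 ^ 2) *
          ((∫⁻ ω, ENNReal.ofReal ((1 / (n : ℝ)) * ∑ i, (gh (X i ω) - g (X i ω)) ^ 2) ∂μ)
            + (∫⁻ ω, ENNReal.ofReal ((1 / (n : ℝ)) * ∑ i, (σh (X i ω) - σ2 (X i ω)) ^ 2) ∂μ)
            + ENNReal.ofReal (2 * a1 ^ 4) *
                (∫⁻ ω, ENNReal.ofReal ((1 / (n : ℝ)) * ∑ i, (f (X i ω) - fh (X i ω)) ^ 2) ∂μ)) :=
  expected_empirical_risk_bound_jump_coefficient_general μ n X hX f g σ2 a2 gh σh fh hmg hmσ2 hmgh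
    hmσh f0 a1 hf0 hg ha2nn ha2bd hsep
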